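/- Upward-closed framing theorem: let h₁, h₂, h_F be flow graphs with h₁ ⋆ h_F defined, h₁ ⪯ctx h₂, and compatible_⪯(h₁), compatible_⪯(h₂), compatible_⪯(h_F). Then there exist flow graphs h₂' ∈ closure^{h_F.X}_⪯(h₂) and h_F' ∈ closure^{h₂.X}_⪯(h_F) such that h₂' ⋆ h_F' is defined and h₁ ⋆ h_F ⪯ctx h₂' ⋆ h_F'. -/

import Mathlib

universe u

/-- A flow monoid: a commutative monoid whose natural order
(`m ≤ n ↔ ∃ o, n = m + o`) is a partial order that forms an ω-cpo, with
continuous addition. `csup` assigns to every ascending chain its join. -/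
class FlowMonoid (M : Type u) extends AddCommMonoid M, PartialOrder M, IsOrderedAddMonoid M,
    CanonicallyOrderedAdd M where
  /-- The join of an ascending chain. -/
  csup : (ℕ → M) → M
  isLUB_csup : ∀ K : ℕ → M, Monotone K → IsLUB (Set.range K) (csup K)
  add_csup : ∀ (n : M) (K : ℕ → M), Monotone K → n + csup K = csup fun i => n + K i

variable {M : Type u} [FlowMonoid M]

/-- Continuity: `f` commutes with joins of ascending chains. -/
def FMCont (f : M → M) : Prop :=
  ∀ K : ℕ → M, Monotone K →
    IsLUB (Set.range fun i => f (K i)) (f (FlowMonoid.csup K))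

/-- A flow graph: a finite set of nodes `X ⊆ ℕ`, continuous edge functions, and
a finitely supported inflow from sources outside `X` into `X`. (The edge
functions of sources outside `X` and the inflow outside its domain are
canonically zero.) -/
structure FlowGraph (M : Type u) [FlowMonoid M] where
  /-- The nodes. -/
  X : Finset ℕ
  /-- The edge functions: `E x y` labels the edge from `x` to `y`. -/
  E : ℕ → ℕ → M → M
  /-- The inflow: `inflow y x` is the flow the graph receives at `x ∈ X` from the
  external node `y ∉ X`. -/
  inflow : ℕ → ℕ → M
  econt : ∀ x y, x ∈ X → FMCont (E x y)
  edom : ∀ x y, x ∉ X → E x y = fun _ => 0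
  inflow_fin : ∀ x, (Function.support fun y => inflow y x).Finite
  inflow_dom : ∀ y x, inflow y x ≠ 0 → y ∉ X ∧ x ∈ X

namespace FlowGraph

/-- One step of the flow fixed-point computation, with inflow `i`. -/
noncomputable def stepWith (h : FlowGraph M) (i : ℕ → ℕ → M) (c : ℕ → M) : ℕ → M :=
  fun x => if x ∈ h.X then (∑ᶠ y, i y x) + ∑ y ∈ h.X, h.E y x (c y) else 0

/-- The flow for a custom inflow `i`, obtained by Kleene iteration: the least
function satisfying the flow equation. -/
noncomputable def flowWith (h : FlowGraph M) (i : ℕ → ℕ → M) : ℕ → M :=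
  fun x => FlowMonoid.csup fun n => (h.stepWith i)^[n] (fun _ => 0) x

/-- The flow of a flow graph. -/
noncomputable def flow (h : FlowGraph M) : ℕ → M := h.flowWith h.inflow

/-- The outflow of a flow graph: `out x y = E x y (flow x)`. -/
noncomputable def out (h : FlowGraph M) (x y : ℕ) : M := h.E x y (h.flow x)

/-- The transfer function: maps an inflow `i` to the resulting outflow at `y`. -/
noncomputable def tf (h : FlowGraph M) (i : ℕ → ℕ → M) (y : ℕ) : M :=
  ∑ x ∈ h.X, h.E x y (h.flowWith i x)

/-- The ghost multiplication of flow graphs: disjoint union of the node sets and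
edges; the inflow of each component is restricted to sources outside the other. -/
def gmul (s t : FlowGraph M) : FlowGraph M where
  X := s.X ∪ t.X
  E := fun x y => if x ∈ s.X then s.E x y else t.E x y
  inflow := fun y x => if y ∈ s.X ∪ t.X then 0 else s.inflow y x + t.inflow y x
  econt := by
    intro x y hx
    try dsimp only
    by_cases hs : x ∈ s.X
    · rw [if_pos hs]; exact s.econt x y hs
    · rw [if_neg hs]
      rcases Finset.mem_union.mp hx with h | h
      · exact absurd h hs
      · exact t.econt x y h
  edom := by
    intro x y hx
    try dsimp only
    rw [if_neg fun h => hx (Finset.mem_union_left _ h)]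
    exact t.edom x y fun h => hx (Finset.mem_union_right _ h)
  inflow_fin := by
    intro x
    refine Set.Finite.subset ((s.inflow_fin x).union (t.inflow_fin x)) ?_
    intro y hy
    rw [Function.mem_support] at hy
    try dsimp only at hy
    by_cases hmem : y ∈ s.X ∪ t.X
    · rw [if_pos hmem] at hy; exact absurd rfl hy
    · rw [if_neg hmem] at hy
      by_cases h1 : s.inflow y x = 0
      · have h2 : t.inflow y x ≠ 0 := fun h2 => hy (by rw [h1, h2, add_zero])
        exact Set.mem_union_right _ (Function.mem_support.mpr h2)
      · exact Set.mem_union_left _ (Function.mem_support.mpr h1)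
  inflow_dom := by
    intro y x hy
    try dsimp only at hy
    by_cases hmem : y ∈ s.X ∪ t.X
    · rw [if_pos hmem] at hy; exact absurd rfl hy
    · rw [if_neg hmem] at hy
      refine ⟨hmem, ?_⟩
      by_cases h1 : s.inflow y x = 0
      · have h2 : t.inflow y x ≠ 0 := fun h2 => hy (by rw [h1, h2, add_zero])
        exact Finset.mem_union_right _ (t.inflow_dom y x h2).2
      · exact Finset.mem_union_left _ (s.inflow_dom y x h1).2

/-- Definedness of the multiplication `s ⋆ t` of flow graphs: the ghost
multiplication is defined, the inflow expectation of each graph at the mutual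
boundary matches the outflow of the other, and the flows are preserved in the
composition (whose result is then `gmul s t`). -/
def MDef (s t : FlowGraph M) : Prop :=
  Disjoint s.X t.X ∧
  (∀ x ∈ s.X, ∀ y ∈ t.X, s.out x y = t.inflow x y ∧ t.out y x = s.inflow y x) ∧
  (∀ x ∈ s.X, (gmul s t).flow x = s.flow x) ∧
  (∀ y ∈ t.X, (gmul s t).flow y = t.flow y)

end FlowGraph

/-- The pointwise join of an ascending chain of functions `X → M`. -/
noncomputable def chainJoin {X : Finset ℕ} (Ch : ℕ → ({x : ℕ // x ∈ X} → M)) :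
    {x : ℕ // x ∈ X} → M :=
  fun x => FlowMonoid.csup fun i => Ch i x

/-- `≤`-continuity of a function on `X → M`: it commutes with joins of
pointwise-ascending chains. -/
def ContOn (X : Finset ℕ)
    (f : ({x : ℕ // x ∈ X} → M) → ({x : ℕ // x ∈ X} → M)) : Prop :=
  ∀ Ch : ℕ → ({x : ℕ // x ∈ X} → M), (∀ i x, Ch i x ≤ Ch (i + 1) x) →
    ∀ x, IsLUB (Set.range fun i => f (Ch i) x) (f (chainJoin Ch) x)

/-- Pointwise `≤`-monotonicity of a function on `X → M`. -/
def MonoOn (X : Finset ℕ)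
    (f : ({x : ℕ // x ∈ X} → M) → ({x : ℕ // x ∈ X} → M)) : Prop :=
  ∀ c d : {x : ℕ // x ∈ X} → M, (∀ x, c x ≤ d x) → ∀ x, f c x ≤ f d x

/-- Pointwise `⪯`-monotonicity of a function on `X → M`. -/
def RMonoOn (r : M → M → Prop) (X : Finset ℕ)
    (f : ({x : ℕ // x ∈ X} → M) → ({x : ℕ // x ∈ X} → M)) : Prop :=
  ∀ c d : {x : ℕ // x ∈ X} → M, (∀ x, r (c x) (d x)) → ∀ x, r (f c x) (f d x)

/-- The join of the Kleene chain `⨆ᵢ fⁱ(⊥)` of a function on `X → M`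
(`⊥` is the constant-0 function); for continuous `f` this is `lfp(f)`. -/
noncomputable def kleeneOn {X : Finset ℕ}
    (f : ({x : ℕ // x ∈ X} → M) → ({x : ℕ // x ∈ X} → M)) : {x : ℕ // x ∈ X} → M :=
  fun x => FlowMonoid.csup fun i => (f^[i] fun _ => 0) x

/-- Condition (C4): for all `≤`-continuous, pointwise-`⪯`-monotone functions
`f, g` on `X → M` with `fⁱ(⊥)` pointwise-`⪯` `gⁱ(⊥)` for all `i` and
`lfp(f)` pointwise-`⪯` `g(lfp(f))`, one has `⨆ᵢ fⁱ(⊥)` pointwise-`⪯` `⨆ᵢ gⁱ(⊥)`. -/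
def C4 (r : M → M → Prop) (X : Finset ℕ) : Prop :=
  ∀ f g : ({x : ℕ // x ∈ X} → M) → ({x : ℕ // x ∈ X} → M),
    ContOn X f → ContOn X g → RMonoOn r X f → RMonoOn r X g →
    (∀ (i : ℕ) (x : {x : ℕ // x ∈ X}), r ((f^[i] fun _ => 0) x) ((g^[i] fun _ => 0) x)) →
    (∀ x, r (kleeneOn f x) (g (kleeneOn f) x)) →
    ∀ x, r (kleeneOn f x) (kleeneOn g x)

/-- `compatible_⪯(h)`: conditions (C1)–(C4) of the relation `⪯` with respect to
the flow graph `h`. -/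
def Compatible (r : M → M → Prop) (h : FlowGraph M) : Prop :=
  -- (C1) transitive and `0 ⪯ 0`
  (∀ m n o : M, r m n → r n o → r m o) ∧ r 0 0 ∧
  -- (C2) compatible with addition
  (∀ m n o : M, r m n → r (m + o) (n + o)) ∧
  -- (C3) the edge functions of `h` are `⪯`-monotone
  (∀ x y : ℕ, x ∈ h.X → ∀ m n : M, r m n → r (h.E x y m) (h.E x y n)) ∧
  -- (C4)
  C4 r h.X
/-- The estimator induced on flow graphs: same nodes, same inflow, and the
transfer functions are related for every smaller inflow. -/
def ctxLe (r : M → M → Prop) (s₁ s₂ : FlowGraph M) : Prop :=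
  s₁.X = s₂.X ∧ s₁.inflow = s₂.inflow ∧
  ∀ i : ℕ → ℕ → M, (∀ y x, i y x ≤ s₁.inflow y x) →
    ∀ y, y ∉ s₁.X → r (s₁.tf i y) (s₂.tf i y)

/-- `inflowLe r Y X i₁ i₂` is the relation `i₁ ⪯^Y i₂` on inflows over node set
`X`: the inflows agree on all sources outside `Y`, and for each target the sums
of the contributions from `Y` are related by `r`. -/
def inflowLe (r : M → M → Prop) (Y X : Finset ℕ) (i₁ i₂ : ℕ → ℕ → M) : Prop :=
  (∀ y, y ∉ Y → ∀ x, i₁ y x = i₂ y x) ∧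
  (∀ x ∈ X, r (∑ y ∈ Y, i₁ y x) (∑ y ∈ Y, i₂ y x))

/-- The `⪯`-upward `Y`-closure of a flow graph: all graphs obtained from `h` by
replacing its inflow with a `⪯^Y`-larger one. -/
def closureSet (r : M → M → Prop) (Y : Finset ℕ) (h : FlowGraph M) :
    Set (FlowGraph M) :=
  {h' | h'.X = h.X ∧ h'.E = h.E ∧ inflowLe r Y h.X h.inflow h'.inflow}

/-!
The witnesses are `h₂` and `h_F` with their mutual inflows replaced by what the other one sends
under the flow of `h₂ ⋆ h_F`; by construction they compose, with composite `h₂ ⋆ h_F` itself.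
Everything then reduces to comparing the flows of `h₁ ⋆ h_F` and `h₂ ⋆ h_F` under a common inflow
below the inflow of `h₁ ⋆ h_F`. On the nodes of `h_F` both are least fixed points of the Bekić
elimination of `hᵢ`: a continuous step function on the nodes of `h_F` alone, in which `hᵢ` enters
only through its transfer function. As long as `h_F` carries at most its flow, it feeds into `h₁`
at most the inflow of `h₁`, so `h₁ ⪯ctx h₂` relates the two step functions, and condition (C4)
for `h_F` relates their least fixed points. On the nodes of `hᵢ` the composite flow is the flow of
`hᵢ` under the inflow fed by `h_F`, so the outflows of `h₁` and `h₂` are related by `h₁ ⪯ctx h₂`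
together with (C3) and (C4) for `h₂`.
-/

namespace FlowMonoid

theorem le_csup {K : ℕ → M} (hK : Monotone K) (i : ℕ) : K i ≤ csup K :=
  (isLUB_csup K hK).1 ⟨i, rfl⟩

theorem csup_le {K : ℕ → M} (hK : Monotone K) {m : M} (h : ∀ i, K i ≤ m) : csup K ≤ m :=
  (isLUB_csup K hK).2 (Set.forall_mem_range.2 h)

theorem csup_eq_of_isLUB {K : ℕ → M} (hK : Monotone K) {m : M}
    (h : IsLUB (Set.range K) m) : csup K = m :=
  (isLUB_csup K hK).unique h

theorem csup_const (m : M) : csup (fun _ => m) = m :=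
  csup_eq_of_isLUB monotone_const (by rw [Set.range_const]; exact isLUB_singleton)

theorem csup_mono {K L : ℕ → M} (hK : Monotone K) (hL : Monotone L) (h : ∀ i, K i ≤ L i) :
    csup K ≤ csup L :=
  csup_le hK fun i => (h i).trans (le_csup hL i)

theorem csup_succ {K : ℕ → M} (hK : Monotone K) : csup (fun n => K (n + 1)) = csup K := by
  have hK' : Monotone fun n => K (n + 1) := hK.comp fun _ _ h => Nat.succ_le_succ h
  exact le_antisymm (csup_le hK' fun i => le_csup hK (i + 1))
    (csup_mono hK hK' fun i => hK i.le_succ)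

theorem csup_add_csup {K L : ℕ → M} (hK : Monotone K) (hL : Monotone L) :
    csup K + csup L = csup fun i => K i + L i := by
  have hKL : Monotone fun i => K i + L i := hK.add hL
  refine le_antisymm ?_ (csup_le hKL fun i => add_le_add (le_csup hK i) (le_csup hL i))
  rw [add_comm, add_csup _ K hK]
  refine csup_le (fun a b hab => add_le_add le_rfl (hK hab)) fun i => ?_
  rw [add_comm, add_csup _ L hL]
  refine csup_le (fun a b hab => add_le_add le_rfl (hL hab)) fun j => ?_
  calc K i + L j ≤ K (max i j) + L (max i j) :=
        add_le_add (hK (le_max_left i j)) (hL (le_max_right i j))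
    _ ≤ _ := le_csup hKL _

theorem csup_sum {α : Type*} (s : Finset α) {F : α → ℕ → M} (hF : ∀ a ∈ s, Monotone (F a)) :
    csup (fun n => ∑ a ∈ s, F a n) = ∑ a ∈ s, csup (F a) := by
  classical
  induction s using Finset.induction_on with
  | empty => simpa using csup_const (0 : M)
  | insert a s ha ih =>
    have hFa := hF a (Finset.mem_insert_self a s)
    have hFs : ∀ b ∈ s, Monotone (F b) := fun b hb => hF b (Finset.mem_insert_of_mem hb)
    simp_rw [Finset.sum_insert ha]
    rw [← ih hFs, csup_add_csup hFa fun m n h => Finset.sum_le_sum fun b hb => hFs b hb h]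

theorem csup_comm {D : ℕ → ℕ → M} (h₁ : ∀ n, Monotone (D n)) (h₂ : ∀ m, Monotone fun n => D n m) :
    csup (fun n => csup (D n)) = csup fun m => csup fun n => D n m := by
  have hmono₁ : Monotone fun n => csup (D n) := fun a b hab =>
    csup_mono (h₁ a) (h₁ b) fun m => h₂ m hab
  have hmono₂ : Monotone fun m => csup fun n => D n m := fun a b hab =>
    csup_mono (h₂ a) (h₂ b) fun n => h₁ n hab
  refine le_antisymm (csup_le hmono₁ fun n => csup_le (h₁ n) fun m => ?_)
    (csup_le hmono₂ fun m => csup_le (h₂ m) fun n => ?_)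
  · exact (le_csup (h₂ m) n).trans (le_csup hmono₂ m)
  · exact (le_csup (h₁ n) m).trans (le_csup hmono₁ n)

end FlowMonoid

open FlowMonoid

theorem FMCont.monotone {f : M → M} (hf : FMCont f) : Monotone f := by
  intro m n hmn
  let K : ℕ → M := fun i => if i = 0 then m else n
  have hK : Monotone K := monotone_nat_of_le_succ fun i => by
    rcases i with _ | _ <;> simp [K, hmn]
  have hcsup : csup K = n := csup_eq_of_isLUB hK
    ⟨Set.forall_mem_range.2 fun i => by rcases i with _ | _ <;> simp [K, hmn],
      fun u hu => hu ⟨1, rfl⟩⟩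
  simpa [K, hcsup] using (hf K hK).1 ⟨0, rfl⟩

theorem FMCont.map_csup {f : M → M} (hf : FMCont f) {K : ℕ → M} (hK : Monotone K) :
    f (csup K) = csup fun i => f (K i) :=
  (csup_eq_of_isLUB (hf.monotone.comp hK) (hf K hK)).symm

/-- Conditions (C1) and (C2) of `Compatible`. -/
structure IsAddPreorderRel {A : Type*} [AddCommMonoid A] (r : A → A → Prop) : Prop where
  trans : ∀ m n o, r m n → r n o → r m o
  zero : r 0 0
  add_right : ∀ m n o, r m n → r (m + o) (n + o)

namespace IsAddPreorderRel

variable {A : Type*} [AddCommMonoid A] {r : A → A → Prop}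

theorem refl (hr : IsAddPreorderRel r) (m : A) : r m m := by
  simpa using hr.add_right 0 0 m hr.zero

theorem add (hr : IsAddPreorderRel r) {m n o p : A} (hmn : r m n) (hop : r o p) :
    r (m + o) (n + p) :=
  hr.trans _ _ _ (hr.add_right m n o hmn) (by simpa only [add_comm n] using hr.add_right o p n hop)

theorem add_left (hr : IsAddPreorderRel r) (m : A) {n o : A} (hno : r n o) : r (m + n) (m + o) :=
  hr.add (hr.refl m) hno

theorem sum (hr : IsAddPreorderRel r) {α : Type*} (s : Finset α) {f g : α → A}
    (h : ∀ a ∈ s, r (f a) (g a)) : r (∑ a ∈ s, f a) (∑ a ∈ s, g a) := by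
  classical
  induction s using Finset.induction_on with
  | empty => simpa using hr.zero
  | insert a s ha ih =>
    rw [Finset.sum_insert ha, Finset.sum_insert ha]
    exact hr.add (h a (Finset.mem_insert_self a s))
      (ih fun b hb => h b (Finset.mem_insert_of_mem hb))

end IsAddPreorderRel

namespace Compatible

variable {r : M → M → Prop} {h : FlowGraph M}

theorem isAddPreorderRel (hc : Compatible r h) : IsAddPreorderRel r :=
  ⟨hc.1, hc.2.1, hc.2.2.1⟩

theorem rel_E (hc : Compatible r h) {x : ℕ} (hx : x ∈ h.X) (y : ℕ) {m n : M} (hmn : r m n) :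
    r (h.E x y m) (h.E x y n) :=
  hc.2.2.2.1 x y hx m n hmn

theorem c4 (hc : Compatible r h) : C4 r h.X :=
  hc.2.2.2.2

end Compatible

namespace FlowGraph

@[ext]
theorem ext {g₁ g₂ : FlowGraph M} (hX : g₁.X = g₂.X) (hE : g₁.E = g₂.E)
    (hin : g₁.inflow = g₂.inflow) : g₁ = g₂ := by
  cases g₁; cases g₂; cases hX; cases hE; cases hin; rfl

theorem inflow_eq_zero_of_mem (g : FlowGraph M) {y : ℕ} (hy : y ∈ g.X) (x : ℕ) :
    g.inflow y x = 0 :=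
  of_not_not fun hne => (g.inflow_dom y x hne).1 hy

theorem inflow_eq_zero_of_notMem (g : FlowGraph M) {x : ℕ} (hx : x ∉ g.X) (y : ℕ) :
    g.inflow y x = 0 :=
  of_not_not fun hne => hx (g.inflow_dom y x hne).2

theorem eq_zero_of_le_inflow {g : FlowGraph M} {i : ℕ → ℕ → M} (hi : i ≤ g.inflow) {y : ℕ}
    (hy : y ∈ g.X) (x : ℕ) : i y x = 0 :=
  nonpos_iff_eq_zero.1 (g.inflow_eq_zero_of_mem hy x ▸ hi y x)

theorem support_finite_of_le_inflow {g : FlowGraph M} {i : ℕ → ℕ → M} (hi : i ≤ g.inflow)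
    (x : ℕ) : (Function.support fun y => i y x).Finite :=
  (g.inflow_fin x).subset fun y hy hg => hy (nonpos_iff_eq_zero.1 (hg ▸ hi y x : i y x ≤ 0))

theorem finsum_le_of_le_inflow {g : FlowGraph M} {i : ℕ → ℕ → M} (hi : i ≤ g.inflow) (x : ℕ) :
    ∑ᶠ y, i y x ≤ ∑ᶠ y, g.inflow y x :=
  finsum_le_finsum' (support_finite_of_le_inflow hi x) (g.inflow_fin x) fun y => hi y x

variable (h : FlowGraph M)

theorem E_monotone {x : ℕ} (hx : x ∈ h.X) (y : ℕ) : Monotone (h.E x y) :=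
  (h.econt x y hx).monotone

theorem sum_E_csup (x : ℕ) {C : ℕ → ℕ → M} (hC : Monotone C) :
    ∑ y ∈ h.X, h.E y x (csup fun n => C n y) = csup fun n => ∑ y ∈ h.X, h.E y x (C n y) := by
  have hCy : ∀ y, Monotone fun n => C n y := fun y _ _ hab => hC hab y
  rw [csup_sum h.X fun y hy _ _ hab => h.E_monotone hy x (hCy y hab)]
  exact Finset.sum_congr rfl fun y hy => (h.econt y x hy).map_csup (hCy y)

theorem stepWith_of_mem (i : ℕ → ℕ → M) (c : ℕ → M) {x : ℕ} (hx : x ∈ h.X) :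
    h.stepWith i c x = (∑ᶠ y, i y x) + ∑ y ∈ h.X, h.E y x (c y) :=
  if_pos hx

theorem stepWith_of_notMem (i : ℕ → ℕ → M) (c : ℕ → M) {x : ℕ} (hx : x ∉ h.X) :
    h.stepWith i c x = 0 :=
  if_neg hx

theorem stepWith_congr (i : ℕ → ℕ → M) {c d : ℕ → M} (hcd : ∀ y ∈ h.X, c y = d y) :
    h.stepWith i c = h.stepWith i d := by
  funext x
  by_cases hx : x ∈ h.X
  · simp only [h.stepWith_of_mem _ _ hx, Finset.sum_congr rfl fun y hy => congrArg _ (hcd y hy)]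
  · simp only [h.stepWith_of_notMem _ _ hx]

theorem stepWith_mono {i j : ℕ → ℕ → M} (hij : ∀ x ∈ h.X, ∑ᶠ y, i y x ≤ ∑ᶠ y, j y x)
    {c d : ℕ → M} (hcd : c ≤ d) : h.stepWith i c ≤ h.stepWith j d := by
  intro x
  by_cases hx : x ∈ h.X
  · rw [h.stepWith_of_mem _ _ hx, h.stepWith_of_mem _ _ hx]
    exact add_le_add (hij x hx) (Finset.sum_le_sum fun y hy => h.E_monotone hy x (hcd y))
  · simp only [h.stepWith_of_notMem _ _ hx, le_rfl]

noncomputable def iter (i : ℕ → ℕ → M) (n : ℕ) : ℕ → M :=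
  (h.stepWith i)^[n] fun _ => 0

theorem iter_succ (i : ℕ → ℕ → M) (n : ℕ) : h.iter i (n + 1) = h.stepWith i (h.iter i n) :=
  Function.iterate_succ_apply' _ _ _

theorem iter_mono_inflow {i j : ℕ → ℕ → M} (hij : ∀ x ∈ h.X, ∑ᶠ y, i y x ≤ ∑ᶠ y, j y x)
    (n : ℕ) : h.iter i n ≤ h.iter j n := by
  induction n with
  | zero => exact le_rfl
  | succ n ih => rw [iter_succ, iter_succ]; exact h.stepWith_mono hij ih

theorem iter_monotone (i : ℕ → ℕ → M) : Monotone (h.iter i) := by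
  refine monotone_nat_of_le_succ fun n => ?_
  induction n with
  | zero => exact fun _ => zero_le
  | succ n ih =>
    rw [iter_succ, iter_succ h i (n + 1)]
    exact h.stepWith_mono (fun _ _ => le_rfl) ih

theorem flowWith_eq_csup (i : ℕ → ℕ → M) (x : ℕ) :
    h.flowWith i x = csup fun n => h.iter i n x := rfl

theorem flowWith_le {i : ℕ → ℕ → M} {c : ℕ → M} (hc : h.stepWith i c ≤ c) :
    h.flowWith i ≤ c := by
  have hiter : ∀ n, h.iter i n ≤ c := fun n => by
    induction n with
    | zero => exact fun _ => zero_le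
    | succ n ih => rw [iter_succ]; exact (h.stepWith_mono (fun _ _ => le_rfl) ih).trans hc
  exact fun x => csup_le (fun _ _ hab => h.iter_monotone i hab x) fun n => hiter n x

theorem flowWith_mono_inflow {i j : ℕ → ℕ → M} (hij : ∀ x ∈ h.X, ∑ᶠ y, i y x ≤ ∑ᶠ y, j y x) :
    h.flowWith i ≤ h.flowWith j := fun x =>
  csup_mono (fun _ _ hab => h.iter_monotone i hab x) (fun _ _ hab => h.iter_monotone j hab x)
    fun n => h.iter_mono_inflow hij n x

theorem stepWith_csup {I : ℕ → ℕ → ℕ → M} {J : ℕ → ℕ → M}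
    (hI : ∀ x ∈ h.X, Monotone fun n => ∑ᶠ y, I n y x)
    (hJ : ∀ x ∈ h.X, ∑ᶠ y, J y x = csup fun n => ∑ᶠ y, I n y x)
    {C : ℕ → ℕ → M} (hC : Monotone C) (x : ℕ) :
    h.stepWith J (fun y => csup fun n => C n y) x = csup fun n => h.stepWith (I n) (C n) x := by
  by_cases hx : x ∈ h.X
  · simp only [h.stepWith_of_mem _ _ hx]
    rw [hJ x hx, h.sum_E_csup x hC, csup_add_csup (hI x hx)
      fun _ _ hab => Finset.sum_le_sum fun y hy => h.E_monotone hy x (hC hab y)]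
  · simp only [h.stepWith_of_notMem _ _ hx, csup_const]

theorem iter_csup {I : ℕ → ℕ → ℕ → M} {J : ℕ → ℕ → M}
    (hI : ∀ x ∈ h.X, Monotone fun n => ∑ᶠ y, I n y x)
    (hJ : ∀ x ∈ h.X, ∑ᶠ y, J y x = csup fun n => ∑ᶠ y, I n y x) (m : ℕ) :
    h.iter J m = fun x => csup fun n => h.iter (I n) m x := by
  induction m with
  | zero => funext x; exact (csup_const 0).symm
  | succ m ih =>
    funext x
    rw [iter_succ, ih, h.stepWith_csup hI hJ (fun _ _ hab => h.iter_mono_inflow (hI · · hab) m) x]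
    simp only [iter_succ]

theorem flowWith_csup {I : ℕ → ℕ → ℕ → M} {J : ℕ → ℕ → M}
    (hI : ∀ x ∈ h.X, Monotone fun n => ∑ᶠ y, I n y x)
    (hJ : ∀ x ∈ h.X, ∑ᶠ y, J y x = csup fun n => ∑ᶠ y, I n y x) (x : ℕ) :
    h.flowWith J x = csup fun n => h.flowWith (I n) x := by
  simp only [flowWith_eq_csup, h.iter_csup hI hJ]
  exact csup_comm (fun _ _ _ hab => h.iter_mono_inflow (hI · · hab) _ x)
    fun n _ _ hab => h.iter_monotone (I n) hab x

theorem tf_csup {I : ℕ → ℕ → ℕ → M} {J : ℕ → ℕ → M}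
    (hI : ∀ x ∈ h.X, Monotone fun n => ∑ᶠ y, I n y x)
    (hJ : ∀ x ∈ h.X, ∑ᶠ y, J y x = csup fun n => ∑ᶠ y, I n y x) (y : ℕ) :
    h.tf J y = csup fun n => h.tf (I n) y := by
  simp only [tf, h.flowWith_csup hI hJ]
  exact h.sum_E_csup y fun _ _ hab => h.flowWith_mono_inflow (hI · · hab)

theorem stepWith_flowWith (i : ℕ → ℕ → M) : h.stepWith i (h.flowWith i) = h.flowWith i := by
  funext x
  rw [show h.flowWith i = fun y => csup fun n => h.iter i n y from rfl,
    h.stepWith_csup (I := fun _ => i) (fun _ _ => monotone_const) (fun _ _ => (csup_const _).symm)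
      (h.iter_monotone i) x]
  simp only [← iter_succ]
  exact csup_succ fun _ _ hab => h.iter_monotone i hab x

end FlowGraph

section Kleene

variable {X : Finset ℕ} {F : (X → M) → (X → M)}

theorem MonoOn.monotone (hF : MonoOn X F) : Monotone F := fun _ _ hcd => hF _ _ hcd

theorem kleene_iterate_monotone (hF : MonoOn X F) : Monotone fun n => F^[n] fun _ => 0 := by
  refine monotone_nat_of_le_succ fun n => ?_
  induction n with
  | zero => exact fun _ => zero_le
  | succ n ih =>
    rw [Function.iterate_succ_apply' F (n + 1), Function.iterate_succ_apply']
    rw [Function.iterate_succ_apply'] at ih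
    exact hF.monotone ih

theorem iterate_le_kleeneOn (hF : MonoOn X F) (n : ℕ) : (F^[n] fun _ => 0) ≤ kleeneOn F :=
  fun x => le_csup (fun _ _ hab => kleene_iterate_monotone hF hab x) n

theorem kleeneOn_le (hF : MonoOn X F) {c : X → M} (hc : F c ≤ c) : kleeneOn F ≤ c := by
  have hiter : ∀ n, (F^[n] fun _ => 0) ≤ c := fun n => by
    induction n with
    | zero => exact fun _ => zero_le
    | succ n ih => rw [Function.iterate_succ_apply']; exact (hF.monotone ih).trans hc
  exact fun x => csup_le (fun _ _ hab => kleene_iterate_monotone hF hab x) fun n => hiter n x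

theorem kleeneOn_fixed (hcont : ContOn X F) (hF : MonoOn X F) : F (kleeneOn F) = kleeneOn F := by
  funext x
  have hchain := kleene_iterate_monotone hF
  have hlub : IsLUB (Set.range fun n => F (F^[n] fun _ => 0) x) (F (kleeneOn F) x) :=
    hcont _ (fun n => hchain n.le_succ) x
  rw [← csup_eq_of_isLUB (fun _ _ hab => hF.monotone (hchain hab) x) hlub]
  simp only [← Function.iterate_succ_apply' F]
  exact csup_succ fun _ _ hab => hchain hab x

end Kleene

noncomputable def extendOn (X : Finset ℕ) (c : X → M) : ℕ → M :=
  fun n => if hn : n ∈ X then c ⟨n, hn⟩ else 0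

theorem extendOn_of_mem {X : Finset ℕ} (c : X → M) {y : ℕ} (hy : y ∈ X) :
    extendOn X c y = c ⟨y, hy⟩ :=
  dif_pos hy

theorem extendOn_mono {X : Finset ℕ} {c d : X → M} (hcd : c ≤ d) : extendOn X c ≤ extendOn X d :=
  fun y => by
    by_cases hy : y ∈ X
    · simp only [extendOn_of_mem _ hy]; exact hcd _
    · simp [extendOn, hy]

theorem extendOn_chainJoin {X : Finset ℕ} (Ch : ℕ → X → M) :
    extendOn X (chainJoin Ch) = fun y => csup fun n => extendOn X (Ch n) y := by
  funext y
  by_cases hy : y ∈ X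
  · simp only [extendOn_of_mem _ hy, chainJoin]
  · simp [extendOn, hy, csup_const]

namespace FlowGraph

section

variable (h : FlowGraph M)

noncomputable def stepOn (i : ℕ → ℕ → M) (c : h.X → M) : h.X → M :=
  fun x => h.stepWith i (extendOn h.X c) x

theorem iterate_stepOn (i : ℕ → ℕ → M) (n : ℕ) (x : h.X) :
    ((h.stepOn i)^[n] fun _ => 0) x = h.iter i n x := by
  induction n generalizing x with
  | zero => rfl
  | succ n ih =>
    rw [Function.iterate_succ_apply', iter_succ, stepOn,
      h.stepWith_congr i fun y hy => (extendOn_of_mem _ hy).trans (ih ⟨y, hy⟩)]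

theorem kleeneOn_stepOn (i : ℕ → ℕ → M) (x : h.X) : kleeneOn (h.stepOn i) x = h.flowWith i x := by
  simp only [kleeneOn, iterate_stepOn, flowWith_eq_csup]

theorem stepOn_contOn (i : ℕ → ℕ → M) : ContOn h.X (h.stepOn i) := by
  intro Ch hCh x
  have hmono : Monotone fun n => extendOn h.X (Ch n) :=
    monotone_nat_of_le_succ fun n => extendOn_mono (hCh n)
  rw [stepOn, extendOn_chainJoin, h.stepWith_csup (I := fun _ => i) (fun _ _ => monotone_const)
    (fun _ _ => (csup_const _).symm) hmono]
  exact isLUB_csup _ fun _ _ hab => h.stepWith_mono (fun _ _ => le_rfl) (hmono hab) x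

variable {r : M → M → Prop}

theorem stepWith_rel (hc : Compatible r h) {i j : ℕ → ℕ → M}
    (hij : ∀ x ∈ h.X, r (∑ᶠ y, i y x) (∑ᶠ y, j y x)) {c d : ℕ → M}
    (hcd : ∀ y ∈ h.X, r (c y) (d y)) {x : ℕ} (hx : x ∈ h.X) :
    r (h.stepWith i c x) (h.stepWith j d x) := by
  rw [h.stepWith_of_mem _ _ hx, h.stepWith_of_mem _ _ hx]
  exact hc.isAddPreorderRel.add (hij x hx)
    (hc.isAddPreorderRel.sum _ fun y hy => hc.rel_E hy x (hcd y hy))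

theorem stepOn_rmonoOn (hc : Compatible r h) (i : ℕ → ℕ → M) : RMonoOn r h.X (h.stepOn i) :=
  fun c d hcd x => h.stepWith_rel hc (fun _ _ => hc.isAddPreorderRel.refl _)
    (fun y hy => by simpa only [extendOn_of_mem _ hy] using hcd ⟨y, hy⟩) x.2

theorem iter_rel (hc : Compatible r h) {i j : ℕ → ℕ → M}
    (hij : ∀ x ∈ h.X, r (∑ᶠ y, i y x) (∑ᶠ y, j y x)) (n : ℕ) :
    ∀ x ∈ h.X, r (h.iter i n x) (h.iter j n x) := by
  induction n with
  | zero => exact fun _ _ => hc.isAddPreorderRel.zero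
  | succ n ih => intro x hx; rw [iter_succ, iter_succ]; exact h.stepWith_rel hc hij ih hx

/-- Condition (C4), applied to the step functions of the two inflows. -/
theorem flowWith_rel (hc : Compatible r h) {i j : ℕ → ℕ → M}
    (hij : ∀ x ∈ h.X, r (∑ᶠ y, i y x) (∑ᶠ y, j y x)) :
    ∀ x ∈ h.X, r (h.flowWith i x) (h.flowWith j x) := by
  have hlfp : ∀ x, r (kleeneOn (h.stepOn i) x) (h.stepOn j (kleeneOn (h.stepOn i)) x) := by
    intro x
    rw [h.kleeneOn_stepOn, stepOn, ← h.stepWith_flowWith i]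
    refine h.stepWith_rel hc hij (fun y hy => ?_) x.2
    rw [extendOn_of_mem _ hy, h.kleeneOn_stepOn]
    exact hc.isAddPreorderRel.refl _
  intro x hx
  simpa only [kleeneOn_stepOn] using hc.c4 _ _ (h.stepOn_contOn i) (h.stepOn_contOn j)
    (h.stepOn_rmonoOn hc i) (h.stepOn_rmonoOn hc j)
    (fun n x => by simpa only [iterate_stepOn] using h.iter_rel hc hij n x x.2) hlfp ⟨x, hx⟩

end

variable {s t : FlowGraph M} {i : ℕ → ℕ → M}

theorem gmul_X : (gmul s t).X = s.X ∪ t.X := rfl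

theorem gmul_E_of_mem_left {y : ℕ} (hy : y ∈ s.X) : (gmul s t).E y = s.E y := by
  simp only [gmul, if_pos hy]

theorem gmul_E_of_mem_right (hd : Disjoint s.X t.X) {y : ℕ} (hy : y ∈ t.X) :
    (gmul s t).E y = t.E y := by
  simp only [gmul, if_neg (Finset.disjoint_right.1 hd hy)]

theorem sum_gmul_E (hd : Disjoint s.X t.X) (c : ℕ → M) (x : ℕ) :
    ∑ y ∈ (gmul s t).X, (gmul s t).E y x (c y) =
      ∑ y ∈ s.X, s.E y x (c y) + ∑ y ∈ t.X, t.E y x (c y) := by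
  rw [gmul_X, Finset.sum_union hd]
  congr 1 <;> refine Finset.sum_congr rfl fun y hy => ?_
  · rw [gmul_E_of_mem_left hy]
  · rw [gmul_E_of_mem_right hd hy]

theorem gmul_comm (hd : Disjoint s.X t.X) : gmul s t = gmul t s := by
  ext1
  · exact Finset.union_comm _ _
  · funext x
    by_cases hs : x ∈ s.X
    · rw [gmul_E_of_mem_left hs, gmul_E_of_mem_right hd.symm hs]
    by_cases ht : x ∈ t.X
    · rw [gmul_E_of_mem_left ht, gmul_E_of_mem_right hd ht]
    · funext y; simp only [gmul, hs, ht, if_false, s.edom x y hs, t.edom x y ht]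
  · funext y x; simp only [gmul, Finset.union_comm s.X, add_comm (s.inflow y x)]

theorem gmul_inflow_of_notMem_right {x y : ℕ} (hx : x ∉ t.X) (hy : y ∉ t.X) :
    (gmul s t).inflow y x = s.inflow y x := by
  by_cases hys : y ∈ s.X
  · simp [gmul, hys, s.inflow_eq_zero_of_mem hys]
  · simp [gmul, hys, hy, t.inflow_eq_zero_of_notMem hx]

/-- The inflow of the nodes `X` when the sources in `t.X` send the values `v` along the edges of
`t`. -/
noncomputable def feedInflow (X : Finset ℕ) (t : FlowGraph M) (i : ℕ → ℕ → M) (v : ℕ → M) :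
    ℕ → ℕ → M :=
  fun y x => if x ∈ X then (if y ∈ t.X then t.E y x (v y) else i y x) else 0

theorem feedInflow_congr {X : Finset ℕ} (i : ℕ → ℕ → M) {v w : ℕ → M}
    (hvw : ∀ y ∈ t.X, v y = w y) : feedInflow X t i v = feedInflow X t i w := by
  funext y x
  by_cases hy : y ∈ t.X <;> simp [feedInflow, hy, hvw]

theorem finsum_feedInflow {X : Finset ℕ} {i : ℕ → ℕ → M} (v : ℕ → M) {x : ℕ} (hx : x ∈ X)
    (hi₀ : ∀ y ∈ t.X, i y x = 0) (hfin : (Function.support fun y => i y x).Finite) :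
    ∑ᶠ y, feedInflow X t i v y x = (∑ᶠ y, i y x) + ∑ y ∈ t.X, t.E y x (v y) := by
  have hsplit : (fun y => feedInflow X t i v y x) =
      fun y => i y x + if y ∈ t.X then t.E y x (v y) else 0 := by
    funext y
    by_cases hy : y ∈ t.X <;> simp [feedInflow, hx, hy, hi₀]
  have hfin' : (Function.support fun y => if y ∈ t.X then t.E y x (v y) else 0).Finite :=
    t.X.finite_toSet.subset (Function.support_subset_iff'.2 fun y hy => if_neg hy)
  rw [hsplit, finsum_add_distrib hfin hfin', ← finsum_mem_coe_finset, finsum_mem_def]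
  simp only [Set.indicator_apply, Finset.mem_coe]

theorem stepWith_gmul_of_mem_left (hd : Disjoint s.X t.X) (hi : i ≤ (gmul s t).inflow)
    (c : ℕ → M) {x : ℕ} (hx : x ∈ s.X) :
    (gmul s t).stepWith i c x = s.stepWith (feedInflow s.X t i c) c x := by
  rw [(gmul s t).stepWith_of_mem _ _ (Finset.mem_union_left _ hx), s.stepWith_of_mem _ _ hx,
    sum_gmul_E hd, finsum_feedInflow c hx
      (fun y hy => eq_zero_of_le_inflow hi (Finset.mem_union_right _ hy) x)
      (support_finite_of_le_inflow hi x)]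
  abel

theorem stepWith_gmul_piecewise (hd : Disjoint s.X t.X) (hi : i ≤ (gmul s t).inflow)
    (v : ℕ → M) {x : ℕ} (hx : x ∈ s.X) :
    (gmul s t).stepWith i (s.X.piecewise (s.flowWith (feedInflow s.X t i v)) v) x =
      s.flowWith (feedInflow s.X t i v) x := by
  rw [stepWith_gmul_of_mem_left hd hi _ hx,
    feedInflow_congr i fun y hy => Finset.piecewise_eq_of_notMem _ _ _
      (Finset.disjoint_right.1 hd hy),
    s.stepWith_congr _ fun y hy => Finset.piecewise_eq_of_mem _ _ _ hy, s.stepWith_flowWith]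

theorem flowWith_feedInflow_gmul (hd : Disjoint s.X t.X) (hi : i ≤ (gmul s t).inflow) {x : ℕ}
    (hx : x ∈ s.X) :
    s.flowWith (feedInflow s.X t i ((gmul s t).flowWith i)) x = (gmul s t).flowWith i x := by
  set g := gmul s t
  set j := feedInflow s.X t i (g.flowWith i)
  have hle : s.flowWith j ≤ g.flowWith i := s.flowWith_le fun z => by
    by_cases hz : z ∈ s.X
    · rw [← stepWith_gmul_of_mem_left hd hi _ hz, g.stepWith_flowWith]
    · simp only [s.stepWith_of_notMem _ _ hz, zero_le]
  refine le_antisymm (hle x) ?_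
  have hB : g.stepWith i (s.X.piecewise (s.flowWith j) (g.flowWith i)) ≤
      s.X.piecewise (s.flowWith j) (g.flowWith i) := fun z => by
    by_cases hz : z ∈ s.X
    · rw [stepWith_gmul_piecewise hd hi _ hz, Finset.piecewise_eq_of_mem _ _ _ hz]
    · rw [Finset.piecewise_eq_of_notMem _ _ _ hz, ← congrFun (g.stepWith_flowWith i) z]
      refine g.stepWith_mono (fun _ _ => le_rfl) (fun y => ?_) z
      by_cases hy : y ∈ s.X <;> simp [hy, hle y]
  simpa [hx] using g.flowWith_le hB x

theorem finsum_feedInflow_gmul (hi : i ≤ (gmul s t).inflow) (v : ℕ → M) {x : ℕ} (hx : x ∈ s.X) :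
    ∑ᶠ y, feedInflow s.X t i v y x = (∑ᶠ y, i y x) + ∑ y ∈ t.X, t.E y x (v y) :=
  finsum_feedInflow v hx (fun _ hy => eq_zero_of_le_inflow hi (Finset.mem_union_right _ hy) x)
    (support_finite_of_le_inflow hi x)

theorem finsum_feedInflow_gmul_mono (hi : i ≤ (gmul s t).inflow) {v w : ℕ → M} (hvw : v ≤ w) :
    ∀ x ∈ s.X, ∑ᶠ y, feedInflow s.X t i v y x ≤ ∑ᶠ y, feedInflow s.X t i w y x := fun x hx => by
  rw [finsum_feedInflow_gmul hi v hx, finsum_feedInflow_gmul hi w hx]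
  exact add_le_add le_rfl (Finset.sum_le_sum fun y hy => t.E_monotone hy x (hvw y))

variable (s t i) in
/-- Bekić elimination of `s` from `gmul s t`: the flow equation of `gmul s t` on the nodes of
`t`, in which the nodes of `s` carry their flow under the inflow that `t` feeds into `s`. -/
noncomputable def bekicStep (c : t.X → M) : t.X → M :=
  fun x => (∑ᶠ y, i y x) + s.tf (feedInflow s.X t i (extendOn t.X c)) x +
    ∑ y ∈ t.X, t.E y x (extendOn t.X c y)

theorem bekicStep_monoOn (hi : i ≤ (gmul s t).inflow) : MonoOn t.X (bekicStep s t i) :=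
  fun c d hcd x => by
    have hext := extendOn_mono (show c ≤ d from hcd)
    refine add_le_add (add_le_add le_rfl (Finset.sum_le_sum fun y hy => s.E_monotone hy _
      (s.flowWith_mono_inflow (finsum_feedInflow_gmul_mono hi hext) y)))
      (Finset.sum_le_sum fun y hy => t.E_monotone hy _ (hext y))

theorem bekicStep_contOn (hi : i ≤ (gmul s t).inflow) : ContOn t.X (bekicStep s t i) := by
  intro Ch hCh x
  have hChm : Monotone Ch := monotone_nat_of_le_succ hCh
  have hv : Monotone fun n => extendOn t.X (Ch n) := fun _ _ hab => extendOn_mono (hChm hab)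
  have htotal : ∀ z ∈ s.X, Monotone fun n => ∑ᶠ y, feedInflow s.X t i (extendOn t.X (Ch n)) y z :=
    fun z hz _ _ hab => finsum_feedInflow_gmul_mono hi (hv hab) z hz
  have htf := s.tf_csup htotal (J := feedInflow s.X t i (extendOn t.X (chainJoin Ch)))
    (fun z hz => by
      simp only [finsum_feedInflow_gmul hi _ hz, extendOn_chainJoin, t.sum_E_csup z hv]
      exact add_csup _ _ fun _ _ hab => Finset.sum_le_sum fun y hy => t.E_monotone hy z (hv hab y))
    x
  have hmono := (bekicStep_monoOn hi).monotone
  have hsum : Monotone fun n => ∑ y ∈ t.X, t.E y x (extendOn t.X (Ch n) y) :=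
    fun _ _ hab => Finset.sum_le_sum fun y hy => t.E_monotone hy x (hv hab y)
  have hstep : bekicStep s t i (chainJoin Ch) x = csup fun n => bekicStep s t i (Ch n) x := by
    have htfm : Monotone fun n => s.tf (feedInflow s.X t i (extendOn t.X (Ch n))) x :=
      fun _ _ hab => Finset.sum_le_sum fun y hy =>
        s.E_monotone hy x (s.flowWith_mono_inflow (finsum_feedInflow_gmul_mono hi (hv hab)) y)
    simp only [bekicStep]
    rw [htf, extendOn_chainJoin, t.sum_E_csup x hv, add_csup (∑ᶠ y, i y x) _ htfm,
      csup_add_csup (fun _ _ hab => add_le_add le_rfl (htfm hab)) hsum]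
  rw [hstep]
  exact isLUB_csup _ fun _ _ hab => hmono (hChm hab) x

theorem bekicStep_eq_stepWith (hd : Disjoint s.X t.X) (c : t.X → M) (x : t.X) :
    bekicStep s t i c x = (gmul s t).stepWith i
      (s.X.piecewise (s.flowWith (feedInflow s.X t i (extendOn t.X c))) (extendOn t.X c)) x := by
  rw [stepWith_of_mem _ _ _ (Finset.mem_union_right _ x.2), sum_gmul_E hd, ← add_assoc]
  simp only [bekicStep, tf]
  congr 1
  · congr 1
    exact Finset.sum_congr rfl fun y hy => by rw [Finset.piecewise_eq_of_mem _ _ _ hy]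
  · exact Finset.sum_congr rfl fun y hy => by
      rw [Finset.piecewise_eq_of_notMem _ _ _ (Finset.disjoint_right.1 hd hy)]

/-- Bekić's lemma. -/
theorem kleeneOn_bekicStep (hd : Disjoint s.X t.X) (hi : i ≤ (gmul s t).inflow) (x : t.X) :
    kleeneOn (bekicStep s t i) x = (gmul s t).flowWith i x := by
  set g := gmul s t
  have hmono := bekicStep_monoOn hi
  have hts : ∀ {y}, y ∈ t.X → y ∉ s.X := fun hy => Finset.disjoint_right.1 hd hy
  refine le_antisymm (kleeneOn_le hmono (c := fun z => g.flowWith i z) (fun z => ?_) x) ?_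
  · rw [bekicStep_eq_stepWith hd, g.stepWith_congr i (d := g.flowWith i) fun y hy => ?_,
      g.stepWith_flowWith]
    rcases Finset.mem_union.1 hy with hys | hyt
    · rw [Finset.piecewise_eq_of_mem _ _ _ hys, ← flowWith_feedInflow_gmul hd hi hys,
        feedInflow_congr i fun y hy => extendOn_of_mem _ hy]
    · rw [Finset.piecewise_eq_of_notMem _ _ _ (hts hyt), extendOn_of_mem _ hyt]
  set k := kleeneOn (bekicStep s t i)
  have hk : bekicStep s t i k = k := kleeneOn_fixed (bekicStep_contOn hi) hmono
  have hB : g.stepWith i (s.X.piecewise (s.flowWith (feedInflow s.X t i (extendOn t.X k)))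
      (extendOn t.X k)) ≤ s.X.piecewise (s.flowWith (feedInflow s.X t i (extendOn t.X k)))
      (extendOn t.X k) := fun z => by
    by_cases hzs : z ∈ s.X
    · rw [stepWith_gmul_piecewise hd hi _ hzs, Finset.piecewise_eq_of_mem _ _ _ hzs]
    by_cases hzt : z ∈ t.X
    · rw [← bekicStep_eq_stepWith hd k ⟨z, hzt⟩, hk, Finset.piecewise_eq_of_notMem _ _ _ hzs,
        extendOn_of_mem _ hzt]
    · rw [g.stepWith_of_notMem _ _ (by simp [g, gmul_X, hzs, hzt])]
      exact zero_le
  simpa [hts x.2, extendOn_of_mem] using g.flowWith_le hB x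

theorem MDef.inflow_left_eq (hmul : MDef s t) {x y : ℕ} (hx : x ∈ s.X) (hy : y ∈ t.X) :
    s.inflow y x = t.E y x ((gmul s t).flow y) := by
  rw [← (hmul.2.1 x hx y hy).2, out, hmul.2.2.2 y hy]

theorem MDef.inflow_right_eq (hmul : MDef s t) {x y : ℕ} (hx : x ∈ t.X) (hy : y ∈ s.X) :
    t.inflow y x = s.E y x ((gmul s t).flow y) := by
  rw [← (hmul.2.1 y hy x hx).1, out, hmul.2.2.1 y hy]

theorem MDef.flowWith_le_flow (hmul : MDef s t) (hi : i ≤ (gmul s t).inflow) {x : ℕ}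
    (hx : x ∈ t.X) : (gmul s t).flowWith i x ≤ t.flow x :=
  hmul.2.2.2 x hx ▸ (gmul s t).flowWith_mono_inflow (fun z _ => finsum_le_of_le_inflow hi z) x

theorem MDef.feedInflow_le_inflow (hmul : MDef s t) (hi : i ≤ (gmul s t).inflow) {v : ℕ → M}
    (hv : ∀ y ∈ t.X, v y ≤ t.flow y) : feedInflow s.X t i v ≤ s.inflow := by
  intro y x
  by_cases hx : x ∈ s.X
  · by_cases hy : y ∈ t.X
    · simp only [feedInflow, hx, hy, if_true]
      rw [← (hmul.2.1 x hx y hy).2]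
      exact t.E_monotone hy x (hv y hy)
    · simp only [feedInflow, hx, hy, if_true, if_false]
      exact (hi y x).trans (gmul_inflow_of_notMem_right (Finset.disjoint_left.1 hmul.1 hx) hy).le
  · simp only [feedInflow, hx, if_false, zero_le]

theorem bekicStep_rmonoOn {r : M → M → Prop} (hcs : Compatible r s) (hct : Compatible r t)
    (hi : i ≤ (gmul s t).inflow) : RMonoOn r t.X (bekicStep s t i) := by
  intro c d hcd x
  have hr := hcs.isAddPreorderRel
  have hext : ∀ y ∈ t.X, r (extendOn t.X c y) (extendOn t.X d y) := fun y hy => by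
    simpa only [extendOn_of_mem _ hy] using hcd ⟨y, hy⟩
  have hsum : ∀ z,
      r (∑ y ∈ t.X, t.E y z (extendOn t.X c y)) (∑ y ∈ t.X, t.E y z (extendOn t.X d y)) :=
    fun z => hr.sum _ fun y hy => hct.rel_E hy z (hext y hy)
  refine hr.add (hr.add_left _ (hr.sum _ fun y hy => hcs.rel_E hy _ ?_)) (hsum x)
  refine s.flowWith_rel hcs (fun z hz => ?_) y hy
  rw [finsum_feedInflow_gmul hi _ hz, finsum_feedInflow_gmul hi _ hz]
  exact hr.add_left _ (hsum z)

section Feed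

variable {h : FlowGraph M}

/-- `h` with its inflow from the nodes of `t` replaced by what `t` sends under the values `v`.
The other sources keep the inflow of `gmul h t`, which on them agrees with that of `h`
(`withFeedInflow_inflow_of_notMem`) and makes the flow a case of `flowWith_feedInflow_gmul`. -/
noncomputable def withFeedInflow (h t : FlowGraph M) (hd : Disjoint h.X t.X) (v : ℕ → M) :
    FlowGraph M where
  X := h.X
  E := h.E
  inflow := feedInflow h.X t (gmul h t).inflow v
  econt := h.econt
  edom := h.edom
  inflow_fin x := by
    refine (((gmul h t).inflow_fin x).union t.X.finite_toSet).subset fun y hy => ?_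
    by_cases hyt : y ∈ t.X
    · exact Or.inr hyt
    · refine Or.inl fun hg => hy ?_
      simp [feedInflow, hyt, hg]
  inflow_dom y x hyx := by
    by_cases hx : x ∈ h.X
    · by_cases hyt : y ∈ t.X
      · exact ⟨Finset.disjoint_right.1 hd hyt, hx⟩
      · simp only [feedInflow, hx, hyt, if_true, if_false] at hyx
        exact ⟨fun hy => ((gmul h t).inflow_dom y x hyx).1 (Finset.mem_union_left _ hy), hx⟩
    · simp [feedInflow, hx] at hyx

variable {hd : Disjoint h.X t.X} {v : ℕ → M}

@[simp]
theorem withFeedInflow_X : (h.withFeedInflow t hd v).X = h.X := rfl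

theorem withFeedInflow_inflow_of_mem {x y : ℕ} (hx : x ∈ h.X) (hy : y ∈ t.X) :
    (h.withFeedInflow t hd v).inflow y x = t.E y x (v y) := by
  simp [withFeedInflow, feedInflow, hx, hy]

theorem withFeedInflow_inflow_of_notMem {y : ℕ} (hy : y ∉ t.X) (x : ℕ) :
    (h.withFeedInflow t hd v).inflow y x = h.inflow y x := by
  by_cases hx : x ∈ h.X
  · simp only [withFeedInflow, feedInflow, hx, hy, if_true, if_false]
    exact gmul_inflow_of_notMem_right (Finset.disjoint_left.1 hd hx) hy
  · simp [withFeedInflow, feedInflow, hx, h.inflow_eq_zero_of_notMem hx]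

theorem gmul_withFeedInflow (w : ℕ → M) :
    gmul (h.withFeedInflow t hd v) (t.withFeedInflow h hd.symm w) = gmul h t := by
  ext1
  · rfl
  · rfl
  funext y x
  by_cases hy : y ∈ h.X ∪ t.X
  · exact (if_pos hy).trans (if_pos hy).symm
  · simp only [gmul, withFeedInflow_X, hy, if_false]
    rw [withFeedInflow_inflow_of_notMem fun h => hy (Finset.mem_union_right _ h),
      withFeedInflow_inflow_of_notMem fun h => hy (Finset.mem_union_left _ h)]

variable (hd) in
theorem flow_withFeedInflow_gmul_flow {x : ℕ} (hx : x ∈ h.X) :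
    (h.withFeedInflow t hd (gmul h t).flow).flow x = (gmul h t).flow x :=
  flowWith_feedInflow_gmul hd le_rfl hx

theorem withFeedInflow_mem_closureSet {r : M → M → Prop}
    (hv : ∀ x ∈ h.X, r (∑ y ∈ t.X, h.inflow y x) (∑ y ∈ t.X, t.E y x (v y))) :
    h.withFeedInflow t hd v ∈ closureSet r t.X h :=
  ⟨rfl, rfl, fun y hy x => (withFeedInflow_inflow_of_notMem hy x).symm, fun x hx => by
    rw [Finset.sum_congr rfl fun y hy => withFeedInflow_inflow_of_mem hx hy]
    exact hv x hx⟩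

variable (hd) in
theorem mDef_withFeedInflow_gmul_flow :
    MDef (h.withFeedInflow t hd (gmul h t).flow) (t.withFeedInflow h hd.symm (gmul h t).flow) := by
  have hflow_t : ∀ y ∈ t.X,
      (t.withFeedInflow h hd.symm (gmul h t).flow).flow y = (gmul h t).flow y := by
    rw [gmul_comm hd]
    exact fun y hy => flow_withFeedInflow_gmul_flow hd.symm hy
  refine ⟨hd, fun x hx y hy => ⟨?_, ?_⟩, fun x hx => ?_, fun y hy => ?_⟩
  · rw [out, flow_withFeedInflow_gmul_flow hd hx,
      withFeedInflow_inflow_of_mem (h := t) (t := h) (x := y) (y := x) hy hx]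
    rfl
  · rw [out, hflow_t y hy, withFeedInflow_inflow_of_mem (h := h) (t := t) (x := x) (y := y) hx hy]
    rfl
  · rw [gmul_withFeedInflow, flow_withFeedInflow_gmul_flow hd hx]
  · rw [gmul_withFeedInflow, hflow_t y hy]

end Feed

end FlowGraph

section Framing

open FlowGraph

variable {r : M → M → Prop} {h₁ h₂ hF : FlowGraph M} {i : ℕ → ℕ → M}

theorem ctxLe.gmul_inflow_eq (hctx : ctxLe r h₁ h₂) (t : FlowGraph M) :
    (gmul h₂ t).inflow = (gmul h₁ t).inflow := by
  simp only [gmul, hctx.1, hctx.2.1]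

theorem ctxLe.bekicStep_rel (hctx : ctxLe r h₁ h₂) (hr : IsAddPreorderRel r) (hmul : MDef h₁ hF)
    (hi : i ≤ (gmul h₁ hF).inflow) {c : hF.X → M} (hc : ∀ x, c x ≤ hF.flow x) (x : hF.X) :
    r (bekicStep h₁ hF i c x) (bekicStep h₂ hF i c x) := by
  simp only [bekicStep, ← hctx.1]
  refine hr.add (hr.add_left _ ?_) (hr.refl _)
  refine hctx.2.2 _ (hmul.feedInflow_le_inflow hi fun y hy => ?_) x
    (Finset.disjoint_right.1 hmul.1 x.2)
  simpa only [extendOn_of_mem _ hy] using hc ⟨y, hy⟩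

/-- Condition (C4) for `hF`, applied to the Bekić eliminations of `h₁` and of `h₂`. -/
theorem ctxLe.flowWith_gmul_rel (hctx : ctxLe r h₁ h₂) (hmul : MDef h₁ hF)
    (hc₁ : Compatible r h₁) (hc₂ : Compatible r h₂) (hcF : Compatible r hF)
    (hi : i ≤ (gmul h₁ hF).inflow) :
    ∀ x ∈ hF.X, r ((gmul h₁ hF).flowWith i x) ((gmul h₂ hF).flowWith i x) := by
  have hd₂ : Disjoint h₂.X hF.X := hctx.1 ▸ hmul.1
  have hi₂ : i ≤ (gmul h₂ hF).inflow := hctx.gmul_inflow_eq hF ▸ hi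
  have hr := hc₁.isAddPreorderRel
  have hmono₁ := bekicStep_monoOn hi
  have hbelow : ∀ c ≤ kleeneOn (bekicStep h₁ hF i), ∀ x, c x ≤ hF.flow x := fun c hc x =>
    (hc x).trans ((kleeneOn_bekicStep hmul.1 hi x).trans_le (hmul.flowWith_le_flow hi x.2))
  have hiter : ∀ n x, r ((bekicStep h₁ hF i)^[n] (fun _ => 0) x)
      ((bekicStep h₂ hF i)^[n] (fun _ => 0) x) := by
    intro n
    induction n with
    | zero => exact fun _ => hr.zero
    | succ n ih =>
      intro x
      rw [Function.iterate_succ_apply', Function.iterate_succ_apply']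
      exact hr.trans _ _ _
        (hctx.bekicStep_rel hr hmul hi (hbelow _ (iterate_le_kleeneOn hmono₁ n)) x)
        (bekicStep_rmonoOn hc₂ hcF hi₂ _ _ ih x)
  have hlfp : ∀ x, r (kleeneOn (bekicStep h₁ hF i) x)
      (bekicStep h₂ hF i (kleeneOn (bekicStep h₁ hF i)) x) := fun x => by
    conv_lhs => rw [← kleeneOn_fixed (bekicStep_contOn hi) hmono₁]
    exact hctx.bekicStep_rel hr hmul hi (hbelow _ le_rfl) x
  intro x hx
  simpa only [kleeneOn_bekicStep hmul.1 hi, kleeneOn_bekicStep hd₂ hi₂] using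
    hcF.c4 _ _ (bekicStep_contOn hi) (bekicStep_contOn hi₂) (bekicStep_rmonoOn hc₁ hcF hi)
      (bekicStep_rmonoOn hc₂ hcF hi₂) hiter hlfp ⟨x, hx⟩

theorem ctxLe.sum_E_flowWith_gmul_rel (hctx : ctxLe r h₁ h₂) (hmul : MDef h₁ hF)
    (hc₁ : Compatible r h₁) (hc₂ : Compatible r h₂) (hcF : Compatible r hF)
    (hi : i ≤ (gmul h₁ hF).inflow) {y : ℕ} (hy : y ∉ h₁.X) :
    r (∑ x ∈ h₁.X, h₁.E x y ((gmul h₁ hF).flowWith i x))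
      (∑ x ∈ h₂.X, h₂.E x y ((gmul h₂ hF).flowWith i x)) := by
  have hd₂ : Disjoint h₂.X hF.X := hctx.1 ▸ hmul.1
  have hi₂ : i ≤ (gmul h₂ hF).inflow := hctx.gmul_inflow_eq hF ▸ hi
  have hr := hc₁.isAddPreorderRel
  rw [← Finset.sum_congr rfl fun x hx =>
      congrArg (h₁.E x y) (flowWith_feedInflow_gmul hmul.1 hi hx),
    ← Finset.sum_congr rfl fun x hx => congrArg (h₂.E x y) (flowWith_feedInflow_gmul hd₂ hi₂ hx)]
  refine hr.trans _ _ _ (hctx.2.2 _ (hmul.feedInflow_le_inflow hi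
    fun z hz => hmul.flowWith_le_flow hi hz) y hy) ?_
  refine hr.sum _ fun x hx => hc₂.rel_E hx y (h₂.flowWith_rel hc₂ (fun z hz => ?_) x hx)
  rw [finsum_feedInflow_gmul hi _ (hctx.1 ▸ hz), finsum_feedInflow_gmul hi₂ _ hz]
  exact hr.add_left _ (hr.sum _ fun w hw =>
    hcF.rel_E hw z (hctx.flowWith_gmul_rel hmul hc₁ hc₂ hcF hi w hw))

theorem ctxLe.gmul_right (hctx : ctxLe r h₁ h₂) (hmul : MDef h₁ hF)
    (hc₁ : Compatible r h₁) (hc₂ : Compatible r h₂) (hcF : Compatible r hF) :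
    ctxLe r (gmul h₁ hF) (gmul h₂ hF) := by
  refine ⟨by rw [gmul_X, gmul_X, hctx.1], (hctx.gmul_inflow_eq hF).symm, fun i hi y hy => ?_⟩
  have hd₂ : Disjoint h₂.X hF.X := hctx.1 ▸ hmul.1
  have hr := hc₁.isAddPreorderRel
  simp only [tf, sum_gmul_E hmul.1, sum_gmul_E hd₂]
  exact hr.add
    (hctx.sum_E_flowWith_gmul_rel hmul hc₁ hc₂ hcF hi fun h => hy (Finset.mem_union_left _ h))
    (hr.sum _ fun x hx => hcF.rel_E hx y (hctx.flowWith_gmul_rel hmul hc₁ hc₂ hcF hi x hx))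

end Framing

open FlowGraph in
/-- Upward-closed framing theorem. For `h₁ ⋆ h_F` defined,
`h₁ ⪯ctx h₂` and `⪯` compatible with `h₁`, `h₂`, `h_F`, there are flow graphs
`h₂' ∈ closure^{h_F.X}_⪯(h₂)` and `h_F' ∈ closure^{h₂.X}_⪯(h_F)` such that
`h₂' ⋆ h_F'` is defined and `h₁ ⋆ h_F ⪯ctx h₂' ⋆ h_F'`. -/
theorem upward_closed_framing (r : M → M → Prop) (h₁ h₂ hF : FlowGraph M)
    (hmul : MDef h₁ hF) (hctx : ctxLe r h₁ h₂)
    (hc₁ : Compatible r h₁) (hc₂ : Compatible r h₂) (hcF : Compatible r hF) :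
    ∃ h₂' ∈ closureSet r hF.X h₂, ∃ hF' ∈ closureSet r h₂.X hF,
      MDef h₂' hF' ∧ ctxLe r (gmul h₁ hF) (gmul h₂' hF') := by
  have hd₂ : Disjoint h₂.X hF.X := hctx.1 ▸ hmul.1
  have hr := hc₁.isAddPreorderRel
  have hflow : (gmul h₂ hF).flowWith (gmul h₁ hF).inflow = (gmul h₂ hF).flow := by
    rw [flow, hctx.gmul_inflow_eq]
  refine ⟨_, withFeedInflow_mem_closureSet fun x hx => ?_, _,
    withFeedInflow_mem_closureSet fun x hx => ?_, mDef_withFeedInflow_gmul_flow hd₂, ?_⟩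
  · rw [← hctx.2.1, Finset.sum_congr rfl fun y hy => hmul.inflow_left_eq (hctx.1 ▸ hx) hy,
      ← hflow]
    exact hr.sum _ fun y hy => hcF.rel_E hy x (hctx.flowWith_gmul_rel hmul hc₁ hc₂ hcF le_rfl y hy)
  · conv_lhs => rw [← hctx.1]
    rw [Finset.sum_congr rfl fun y hy => hmul.inflow_right_eq hx hy, ← hflow]
    exact hctx.sum_E_flowWith_gmul_rel hmul hc₁ hc₂ hcF le_rfl (Finset.disjoint_right.1 hmul.1 hx)
  · rw [gmul_withFeedInflow]
    exact hctx.gmul_right hmul hc₁ hc₂ hcF
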